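/- If two finite pointed graphs (G,w) and (G',u) are distinguished by the Weisfeiler-Leman algorithm at round t (i.e., WL^t(G,w) ≠ WL^t(G',u) running WL on the disjoint union), then there exists a graded modal logic formula φ of modal depth at most t (over empty proposition vocabulary, single modality) such that (G,w) ⊨ φ and (G',u) ⊭ φ. -/

import Mathlib

/-- Syntax of graded multimodal logic over propositions `P` and indices `I`. -/
inductive GMML (P : Type) (I : Type) : Type
  | top : GMML P I
  | prop : P → GMML P I
  | neg : GMML P I → GMML P I
  | and : GMML P I → GMML P I → GMML P I
  | dia : I → ℕ → GMML P I → GMML P I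

/-- Satisfaction of a GMML formula at a point of a Kripke model. -/
def GMML.Sat {P I W : Type} (R : I → W → W → Prop) (V : P → W → Prop) :
    W → GMML P I → Prop
  | _, .top => True
  | w, .prop p => V p w
  | w, .neg φ => ¬ GMML.Sat R V w φ
  | w, .and φ ψ => GMML.Sat R V w φ ∧ GMML.Sat R V w ψ
  | w, .dia α k φ => k ≤ {v | R α w v ∧ GMML.Sat R V v φ}.ncard

/-- Modal depth of a GMML formula. -/
def GMML.md {P I : Type} : GMML P I → ℕ
  | .top => 0
  | .prop _ => 0
  | .neg φ => φ.md
  | .and φ ψ => max φ.md ψ.md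
  | .dia _ _ φ => φ.md + 1

/-- A finite pointed Kripke model of vocabulary `(P, I)`. -/
structure PKModel (P I : Type) where
  W : Type
  fin : Finite W
  R : I → W → W → Prop
  V : P → W → Prop
  pt : W

/-- Satisfaction at the distinguished point of a pointed model. -/
def PKModel.Sat {P I : Type} (M : PKModel P I) (φ : GMML P I) : Prop :=
  GMML.Sat M.R M.V M.pt φ

/-- The Weisfeiler-Leman equivalences `≈_t`: `≈_0` relates everything, and
`a ≈_{t+1} b` iff `a ≈_t b` and for every `≈_t`-equivalence class `C`, `a` and `b`
have equally many `E`-neighbors in `C`. -/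
def WLrel {V : Type} (E : V → V → Prop) : ℕ → V → V → Prop
  | 0 => fun _ _ => True
  | t + 1 => fun a b => WLrel E t a b ∧
      ∀ C : Set V, (∀ x ∈ C, ∀ y, y ∈ C ↔ WLrel E t x y) →
        {a' | E a a' ∧ a' ∈ C}.ncard = {b' | E b b' ∧ b' ∈ C}.ncard

/-- The edge relation of the disjoint union of two graphs. -/
def sumE {V1 V2 : Type} (E1 : V1 → V1 → Prop) (E2 : V2 → V2 → Prop) :
    V1 ⊕ V2 → V1 ⊕ V2 → Prop
  | .inl a, .inl b => E1 a b
  | .inr a, .inr b => E2 a b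
  | _, _ => False

/-! The `≈_t`-class of a point is defined by a formula of depth `t`: for `t + 1`, conjoin the
formula of its `≈_t`-class with, for each of the finitely many `≈_t`-classes `C`, the formula
"exactly `n_C` successors lie in `C`", where `n_C` is the number of its successors in `C`. The
formula of the class of `w` in the disjoint union separates `w` from `u`, and satisfaction at a
point of a summand ignores the other summand, since summands are closed under successors. -/

namespace GMML

variable {P I W : Type}

def conj (l : List (GMML P I)) : GMML P I :=
  l.foldr .and .top

def diaEq (α : I) (n : ℕ) (φ : GMML P I) : GMML P I :=
  .and (.dia α n φ) (.neg (.dia α (n + 1) φ))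

theorem sat_conj (R : I → W → W → Prop) (V : P → W → Prop) (w : W) (l : List (GMML P I)) :
    Sat R V w (conj l) ↔ ∀ φ ∈ l, Sat R V w φ := by
  induction l with
  | nil => simp [conj, Sat]
  | cons φ l ih => simp [conj, Sat, ← ih]

theorem md_conj_le {n : ℕ} (l : List (GMML P I)) (h : ∀ φ ∈ l, φ.md ≤ n) :
    (conj l).md ≤ n := by
  induction l with
  | nil => simp [conj, md]
  | cons φ l ih => simpa [conj, md, h φ] using ih fun ψ hψ => h ψ (List.mem_cons_of_mem _ hψ)

theorem sat_diaEq (R : I → W → W → Prop) (V : P → W → Prop) (w : W) (α : I) (n : ℕ)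
    (φ : GMML P I) :
    Sat R V w (diaEq α n φ) ↔ {v | R α w v ∧ Sat R V v φ}.ncard = n := by
  simp only [diaEq, Sat]
  omega

theorem md_diaEq (α : I) (n : ℕ) (φ : GMML P I) : (diaEq α n φ).md = φ.md + 1 := by
  simp [diaEq, md]

theorem sat_map_iff {W' : Type} {R : I → W → W → Prop} {V : P → W → Prop}
    {R' : I → W' → W' → Prop} {V' : P → W' → Prop} {f : W → W'} (hf : f.Injective)
    (hR : ∀ α a b', R' α (f a) b' ↔ ∃ b, R α a b ∧ f b = b') (hV : ∀ p a, V' p (f a) ↔ V p a)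
    (φ : GMML P I) (a : W) : Sat R' V' (f a) φ ↔ Sat R V a φ := by
  induction φ generalizing a with
  | top => simp [Sat]
  | prop p => exact hV p a
  | neg φ ih => simp [Sat, ih]
  | and φ ψ ihφ ihψ => simp [Sat, ihφ, ihψ]
  | dia α k φ ih =>
    have himage : {v' | R' α (f a) v' ∧ Sat R' V' v' φ} = f '' {v | R α a v ∧ Sat R V v φ} := by
      ext v'
      simp only [Set.mem_ofPred_eq, hR, Set.mem_image]
      constructor
      · rintro ⟨⟨b, hab, rfl⟩, hb⟩
        exact ⟨b, ⟨hab, (ih b).1 hb⟩, rfl⟩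
      · rintro ⟨b, ⟨hab, hb⟩, rfl⟩
        exact ⟨⟨b, hab, rfl⟩, (ih b).2 hb⟩
    simp only [Sat, himage, Set.ncard_image_of_injective _ hf]

end GMML

abbrev GMML.SatGraph {V : Type} (E : V → V → Prop) : V → GMML Empty Unit → Prop :=
  GMML.Sat (fun _ => E) (fun p _ => p.elim)

section WL

variable {V : Type} (E : V → V → Prop)

theorem WLrel.equivalence (t : ℕ) : Equivalence (WLrel E t) := by
  induction t with
  | zero => exact ⟨fun _ => trivial, fun _ => trivial, fun _ _ => trivial⟩
  | succ t ih =>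
    refine ⟨fun x => ⟨ih.refl x, fun _ _ => rfl⟩,
      fun h => ⟨ih.symm h.1, fun C hC => (h.2 C hC).symm⟩,
      fun h₁ h₂ => ⟨ih.trans h₁.1 h₂.1, fun C hC => (h₁.2 C hC).trans (h₂.2 C hC)⟩⟩

noncomputable def WLcount (t : ℕ) (a z : V) : ℕ :=
  {a' | E a a' ∧ WLrel E t z a'}.ncard

/-- The sets quantified over in `WLrel` are the empty set and the `≈_t`-classes. -/
theorem WLrel_succ_iff (t : ℕ) (a b : V) :
    WLrel E (t + 1) a b ↔ WLrel E t a b ∧ ∀ z, WLcount E t a z = WLcount E t b z := by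
  have heqv := WLrel.equivalence E t
  refine and_congr_right fun _ => ⟨fun h z => h _ fun x hx y => ⟨fun hy => ?_, fun hy => ?_⟩,
    fun h C hC => ?_⟩
  · exact heqv.trans (heqv.symm hx) hy
  · exact heqv.trans hx hy
  · rcases C.eq_empty_or_nonempty with rfl | ⟨z, hz⟩
    · simp
    · have hCz : C = {v | WLrel E t z v} := Set.ext (hC z hz)
      subst hCz
      exact h z

noncomputable def WLcharFormula [Fintype V] : ℕ → V → GMML Empty Unit
  | 0, _ => .top
  | t + 1, x => .and (WLcharFormula t x) <| GMML.conj <|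
      Finset.univ.toList.map fun z => .diaEq () (WLcount E t x z) (WLcharFormula t z)

variable [Fintype V]

theorem md_WLcharFormula_le (t : ℕ) (x : V) : (WLcharFormula E t x).md ≤ t := by
  induction t generalizing x with
  | zero => simp [WLcharFormula, GMML.md]
  | succ t ih =>
    refine max_le (ih x |>.trans t.le_succ) (GMML.md_conj_le _ ?_)
    simp only [List.mem_map, forall_exists_index, and_imp]
    rintro _ z - rfl
    simpa [GMML.md_diaEq] using ih z

theorem satGraph_WLcharFormula_iff (t : ℕ) (x y : V) :
    GMML.SatGraph E y (WLcharFormula E t x) ↔ WLrel E t x y := by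
  induction t generalizing x y with
  | zero => simp [WLcharFormula, GMML.Sat, WLrel]
  | succ t ih =>
    simp only [WLcharFormula, GMML.SatGraph, GMML.Sat, GMML.sat_conj, List.forall_mem_map,
      Finset.mem_toList, Finset.mem_univ, true_implies, GMML.sat_diaEq]
    rw [WLrel_succ_iff]
    simp only [GMML.SatGraph] at ih
    simp only [ih, WLcount, eq_comm]

end WL

section DisjointUnion

variable {V1 V2 : Type} (E1 : V1 → V1 → Prop) (E2 : V2 → V2 → Prop)

theorem satGraph_sumE_inl (φ : GMML Empty Unit) (a : V1) :
    GMML.SatGraph (sumE E1 E2) (.inl a) φ ↔ GMML.SatGraph E1 a φ :=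
  GMML.sat_map_iff Sum.inl_injective (fun _ a b' => by cases b' <;> simp [sumE])
    (fun p => p.elim) φ a

theorem satGraph_sumE_inr (φ : GMML Empty Unit) (a : V2) :
    GMML.SatGraph (sumE E1 E2) (.inr a) φ ↔ GMML.SatGraph E2 a φ :=
  GMML.sat_map_iff Sum.inr_injective (fun _ a b' => by cases b' <;> simp [sumE])
    (fun p => p.elim) φ a

end DisjointUnion

/-- if the Weisfeiler-Leman algorithm distinguishes two finite pointed
graphs at round `t` (running on their disjoint union), then some graded modal formula
(empty proposition vocabulary, single modality) of modal depth at most `t` is true at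
the first point and false at the second. -/
theorem WL_distinguishes_implies_GML_formula {V1 V2 : Type}
    [Fintype V1] [Fintype V2] (E1 : V1 → V1 → Prop) (E2 : V2 → V2 → Prop)
    (w : V1) (u : V2) (t : ℕ)
    (h : ¬ WLrel (sumE E1 E2) t (.inl w) (.inr u)) :
    ∃ φ : GMML Empty Unit, φ.md ≤ t ∧
      GMML.Sat (fun _ => E1) (fun p _ => p.elim) w φ ∧
      ¬ GMML.Sat (fun _ => E2) (fun p _ => p.elim) u φ := by
  refine ⟨WLcharFormula (sumE E1 E2) t (.inl w), md_WLcharFormula_le _ t _, ?_, ?_⟩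
  · exact (satGraph_sumE_inl E1 E2 _ w).1 <|
      (satGraph_WLcharFormula_iff _ t _ _).2 ((WLrel.equivalence _ t).refl _)
  · exact mt (satGraph_sumE_inr E1 E2 _ u).2 <| mt (satGraph_WLcharFormula_iff _ t _ _).1 h
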